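/- arXiv:2309.08383 — 3 statements merged into one kernel-verified Lean document; each statement's English description precedes it below -/
import Mathlib

section
/- Consider system (2) with parameters a,b,c,k,m > 0. If x,y : ℝ → ℝ are differentiable, satisfy x'(t) = F(x(t),y(t)) and y'(t) = G(x(t),y(t)) for all t ≥ 0, and x(t) > 0, y(t) > 0 for all t ≥ 0, then limsup_{t→∞} x(t) ≤ 1 and limsup_{t→∞} y(t) ≤ 1. -/
open Filter Set

/-!
Above the level `1`, each coordinate decreases at a definite rate: if `x ≥ 1 + ε` then the
bracket `1 - x - c y` is at most `-ε`, so `x' ≤ -b ε`; if `y ≥ 1 + ε` then, since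
`1 / (1 + k x) ≤ 1`, the bracket of `y'` is at most `-ε`, so `y' ≤ -ε`. A function whose
derivative is at most `-δ < 0` whenever it lies above a level `L` reaches `L` in finite time and
can never cross it upwards afterwards, so it is eventually `≤ L`. Letting `ε → 0` bounds the
limsup.
-/

section DecayAboveLevel

variable {f : ℝ → ℝ} {L : ℝ}

theorem exists_le_of_deriv_le_neg (hf : Differentiable ℝ f) {δ : ℝ} (hδ : 0 < δ)
    (hd : ∀ t ≥ 0, L ≤ f t → deriv f t ≤ -δ) : ∃ t ≥ 0, f t ≤ L := by
  by_contra! habove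
  set T := (f 0 - L) / δ
  have hT : 0 ≤ T := div_nonneg (sub_nonneg.2 (habove 0 le_rfl).le) hδ.le
  have hmvt : f T - f 0 ≤ -δ * (T - 0) :=
    (convex_Ici 0).image_sub_le_mul_sub_of_deriv_le hf.continuous.continuousOn
      hf.differentiableOn
      (fun t ht => hd t (interior_subset ht) (habove t (interior_subset ht)).le)
      0 self_mem_Ici T hT hT
  have hδT : δ * T = f 0 - L := mul_div_cancel₀ _ hδ.ne'
  linarith [habove T hT]

theorem le_of_deriv_neg_of_eq (hf : Differentiable ℝ f) {t₀ : ℝ}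
    (hd : ∀ t ≥ t₀, f t = L → deriv f t < 0) (h₀ : f t₀ ≤ L) : ∀ t ≥ t₀, f t ≤ L :=
  fun _ ht =>
    image_le_of_deriv_right_lt_deriv_boundary (B := fun _ => L) (B' := fun _ => 0)
      hf.continuous.continuousOn (fun s _ => (hf s).hasDerivAt.hasDerivWithinAt) h₀
      (fun s => hasDerivAt_const s L) (fun s hs => hd s hs.1) ⟨ht, le_rfl⟩

theorem eventually_le_of_deriv_le_neg (hf : Differentiable ℝ f) {δ : ℝ} (hδ : 0 < δ)
    (hd : ∀ t ≥ 0, L ≤ f t → deriv f t ≤ -δ) : ∀ᶠ t in atTop, f t ≤ L := by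
  obtain ⟨t₀, ht₀, hft₀⟩ := exists_le_of_deriv_le_neg hf hδ hd
  have hstays : ∀ t ≥ t₀, f t ≤ L := le_of_deriv_neg_of_eq hf
    (fun t ht hft => (hd t (ht₀.trans ht) hft.ge).trans_lt (neg_neg_of_pos hδ)) hft₀
  exact eventually_atTop.2 ⟨t₀, hstays⟩

theorem limsup_le_of_forall_pos_eventually_le {α : Type*} {l : Filter α} {u : α → ℝ}
    (hu : IsCoboundedUnder (· ≤ ·) l u) (h : ∀ ε > 0, ∀ᶠ t in l, u t ≤ L + ε) :
    limsup u l ≤ L :=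
  le_of_forall_pos_le_add fun ε hε => limsup_le_of_le hu (h ε hε)

theorem limsup_le_of_deriv_le_neg (hf : Differentiable ℝ f)
    (hbdd : IsBoundedUnder (· ≥ ·) atTop f)
    (hd : ∀ ε > 0, ∃ δ > 0, ∀ t ≥ 0, L + ε ≤ f t → deriv f t ≤ -δ) :
    limsup f atTop ≤ L :=
  limsup_le_of_forall_pos_eventually_le hbdd.isCoboundedUnder_le fun ε hε =>
    let ⟨_, hδ, hdε⟩ := hd ε hε
    eventually_le_of_deriv_le_neg hf hδ hdε

end DecayAboveLevel

theorem mul_le_neg_of_one_le_of_le_neg {u v ε : ℝ} (hu : 1 ≤ u) (hε : 0 ≤ ε) (hv : v ≤ -ε) :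
    u * v ≤ -ε := by
  nlinarith

theorem isBoundedUnder_ge_atTop_of_pos {u : ℝ → ℝ} (hu : ∀ t ≥ (0 : ℝ), 0 < u t) :
    IsBoundedUnder (· ≥ ·) atTop u :=
  isBoundedUnder_of_eventually_ge ((eventually_ge_atTop 0).mono fun t ht => (hu t ht).le)

/-- **Boundedness of solutions of system (2).**
For positive solutions of x' = b·x·(1 − x − c·y),
y' = y·(1/(1+k·x) − y − a·x − m·x·y) with a,b,c,k,m > 0, we have
limsup_{t→∞} x(t) ≤ 1 and limsup_{t→∞} y(t) ≤ 1. -/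
theorem limsup_le_one_of_system
    (a b c k m : ℝ) (ha : 0 < a) (hb : 0 < b) (hc : 0 < c)
    (hk : 0 < k) (hm : 0 < m) (x y : ℝ → ℝ)
    (hx : Differentiable ℝ x) (hy : Differentiable ℝ y)
    (hxeq : ∀ t ≥ (0 : ℝ), deriv x t = b * x t * (1 - x t - c * y t))
    (hyeq : ∀ t ≥ (0 : ℝ), deriv y t =
      y t * (1 / (1 + k * x t) - y t - a * x t - m * x t * y t))
    (hxpos : ∀ t ≥ (0 : ℝ), 0 < x t) (hypos : ∀ t ≥ (0 : ℝ), 0 < y t) :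
    Filter.limsup x Filter.atTop ≤ 1 ∧ Filter.limsup y Filter.atTop ≤ 1 := by
  constructor
  · refine limsup_le_of_deriv_le_neg hx (isBoundedUnder_ge_atTop_of_pos hxpos)
      fun ε hε => ⟨b * ε, by positivity, fun t ht hxt => ?_⟩
    have hbracket : 1 - x t - c * y t ≤ -ε := by nlinarith [mul_pos hc (hypos t ht)]
    rw [hxeq t ht, mul_assoc, ← mul_neg]
    exact mul_le_mul_of_nonneg_left
      (mul_le_neg_of_one_le_of_le_neg (by linarith) hε.le hbracket) hb.le
  · refine limsup_le_of_deriv_le_neg hy (isBoundedUnder_ge_atTop_of_pos hypos)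
      fun ε hε => ⟨ε, hε, fun t ht hyt => ?_⟩
    have hx0 := hxpos t ht
    have hfrac : 1 / (1 + k * x t) ≤ 1 := by
      rw [div_le_one (by positivity)]
      nlinarith [mul_pos hk hx0]
    have hbracket : 1 / (1 + k * x t) - y t - a * x t - m * x t * y t ≤ -ε := by
      nlinarith [mul_pos ha hx0, mul_pos (mul_pos hm hx0) (hypos t ht)]
    rw [hyeq t ht]
    exact mul_le_neg_of_one_le_of_le_neg (by linarith) hε.le hbracket
end

section
/- Consider system (2) with parameters a,b,c,k,m > 0 and assume 0 < a < 1 and 0 < k < 1/a − 1. If x,y : ℝ → ℝ are differentiable, satisfy x'(t) = F(x(t),y(t)) and y'(t) = G(x(t),y(t)) for all t ≥ 0, and x(t) > 0, y(t) > 0 for all t ≥ 0, then liminf_{t→∞} y(t) ≥ (1/(1+k) − a)/(1+m), and this lower bound is positive. -/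
open Filter Set Topology

/-!
Both species are dominated by logistic equations, `x' ≤ b x (1 - x)` and `y' ≤ y (1 - y)`, so
eventually `x ≤ s` for every `s > 1`, and `y` is eventually bounded. Once `x ≤ s`, the equation
for `y` gives `y' ≥ (1 + m s) y (L(s) - y)` with `L(s) = persistenceLevel a k m s`, so `y` is
eventually above every `r < L(s)`; letting `s ↓ 1` gives `liminf y ≥ L(1)`, which is positive
exactly when `a (1 + k) < 1`.

Each logistic comparison is a barrier argument: outside the target region the derivative is
bounded away from zero in the right direction, so the solution enters the region, and on its
boundary the derivative points inward, so it never leaves.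
-/

section Comparison

variable {f : ℝ → ℝ} {c T : ℝ}

theorem le_of_deriv_neg_at_level (hf : Differentiable ℝ f) (hT : f T ≤ c)
    (h : ∀ t ≥ T, f t = c → deriv f t < 0) : ∀ t ≥ T, f t ≤ c := fun _ ht =>
  image_le_of_deriv_right_lt_deriv_boundary' (B' := fun _ => 0) hf.continuous.continuousOn
    (fun u _ => (hf u).hasDerivAt.hasDerivWithinAt) hT continuousOn_const
    (fun _ _ => hasDerivWithinAt_const _ _ _) (fun u hu => h u hu.1) ⟨ht, le_rfl⟩

theorem ge_of_deriv_pos_at_level (hf : Differentiable ℝ f) (hT : c ≤ f T)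
    (h : ∀ t ≥ T, c = f t → 0 < deriv f t) : ∀ t ≥ T, c ≤ f t := fun _ ht =>
  image_le_of_deriv_right_lt_deriv_boundary' (f' := fun _ => 0) continuousOn_const
    (fun _ _ => hasDerivWithinAt_const _ _ _) hT hf.continuous.continuousOn
    (fun u _ => (hf u).hasDerivAt.hasDerivWithinAt) (fun u hu => h u hu.1) ⟨ht, le_rfl⟩

theorem exists_lt_of_deriv_le_neg (hf : Differentiable ℝ f) {δ : ℝ} (hδ : 0 < δ)
    (h : ∀ t ≥ T, c ≤ f t → deriv f t ≤ -δ) : ∃ t ≥ T, f t < c := by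
  by_contra! hge
  have hderiv (t : ℝ) : HasDerivAt (fun u => f u + δ * u) (deriv f t + δ) t := by
    have := (hf t).hasDerivAt.add ((hasDerivAt_id t).const_mul δ)
    rwa [mul_one] at this
  have hanti : AntitoneOn (fun u => f u + δ * u) (Ici T) := by
    refine antitoneOn_of_deriv_nonpos (convex_Ici T)
      (fun t _ => (hderiv t).continuousAt.continuousWithinAt)
      (fun t _ => (hderiv t).differentiableAt.differentiableWithinAt) fun t ht => ?_
    rw [interior_Ici] at ht
    rw [(hderiv t).deriv]
    linarith [h t ht.le (hge t ht.le)]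
  set t := T + (f T - c + 1) / δ
  have hTt : T ≤ t := le_add_of_nonneg_right (div_nonneg (by linarith [hge T le_rfl]) hδ.le)
  have hdrop : δ * t = δ * T + (f T - c + 1) := by simp only [t]; field_simp
  linarith [hanti self_mem_Ici hTt hTt, hge t hTt]

theorem exists_gt_of_le_deriv (hf : Differentiable ℝ f) {δ : ℝ} (hδ : 0 < δ)
    (h : ∀ t ≥ T, f t ≤ c → δ ≤ deriv f t) : ∃ t ≥ T, c < f t := by
  obtain ⟨t, ht, hlt⟩ := exists_lt_of_deriv_le_neg (c := -c) hf.neg hδ fun t ht hle => by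
    have hle : -c ≤ -f t := hle
    rw [deriv.neg]
    linarith [h t ht (by linarith)]
  exact ⟨t, ht, by simpa using hlt⟩

end Comparison

section Logistic

variable {f : ℝ → ℝ} {β T : ℝ}

theorem eventually_le_of_deriv_le_logistic (hf : Differentiable ℝ f) (hβ : 0 < β) {K r : ℝ}
    (hK : 0 ≤ K) (hr : K < r) (hderiv : ∀ t ≥ T, deriv f t ≤ β * f t * (K - f t)) :
    ∀ᶠ t in atTop, f t ≤ r := by
  have hr0 : 0 < r := hK.trans_lt hr
  have hδ : 0 < β * r * (r - K) := by have := sub_pos.2 hr; positivity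
  obtain ⟨t₀, ht₀, hlt⟩ := exists_lt_of_deriv_le_neg (c := r) hf hδ fun t ht hle => by
    have := hderiv t ht
    nlinarith [mul_le_mul_of_nonneg_left hle hβ.le]
  refine eventually_atTop.2 ⟨t₀, le_of_deriv_neg_at_level hf hlt.le fun t ht heq => ?_⟩
  have := hderiv t (ht₀.trans ht)
  rw [heq] at this
  nlinarith

theorem eventually_ge_of_logistic_le_deriv (hf : Differentiable ℝ f) (hβ : 0 < β) {L r : ℝ}
    (hr : r < L) (hpos : ∀ t ≥ T, 0 < f t) (hderiv : ∀ t ≥ T, β * f t * (L - f t) ≤ deriv f t) :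
    ∀ᶠ t in atTop, r ≤ f t := by
  rcases le_or_gt r 0 with hr0 | hr0
  · exact eventually_atTop.2 ⟨T, fun t ht => hr0.trans (hpos t ht).le⟩
  -- The floor `f₀` keeps the growth rate `β f (L - f)` bounded away from zero while `f ≤ r`.
  set f₀ := min (f T) r
  have hf₀ : 0 < f₀ := lt_min (hpos T le_rfl) hr0
  have hfloor : ∀ t ≥ T, f₀ ≤ f t :=
    ge_of_deriv_pos_at_level hf (min_le_left _ _) fun t ht heq => by
      have := hderiv t ht
      rw [← heq] at this
      have := sub_pos.2 ((min_le_right (f T) r).trans_lt hr)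
      nlinarith [mul_pos (mul_pos hβ hf₀) this]
  have hδ : 0 < β * f₀ * (L - r) := by have := sub_pos.2 hr; positivity
  obtain ⟨t₁, ht₁, hgt⟩ := exists_gt_of_le_deriv (c := r) hf hδ fun t ht hle => by
    have := hpos t ht
    calc β * f₀ * (L - r) ≤ β * f t * (L - r) := by gcongr; exact hfloor t ht
      _ ≤ β * f t * (L - f t) := by gcongr
      _ ≤ deriv f t := hderiv t ht
  refine eventually_atTop.2 ⟨t₁, ge_of_deriv_pos_at_level hf hgt.le fun t ht heq => ?_⟩
  have := hderiv t (ht₁.trans ht)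
  rw [← heq] at this
  have := sub_pos.2 hr
  nlinarith [mul_pos (mul_pos hβ hr0) this]

end Logistic

noncomputable def persistenceLevel (a k m s : ℝ) : ℝ :=
  (1 / (1 + k * s) - a * s) / (1 + m * s)

section Rates

variable {a k m x y : ℝ}

theorem competition_rate_le_logistic (ha : 0 ≤ a) (hk : 0 ≤ k) (hm : 0 ≤ m) (hx : 0 ≤ x)
    (hy : 0 ≤ y) : y * (1 / (1 + k * x) - y - a * x - m * x * y) ≤ 1 * y * (1 - y) := by
  have hinv : 1 / (1 + k * x) ≤ 1 := div_le_one_of_le₀ (by nlinarith) (by positivity)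
  have : 0 ≤ a * x + m * x * y := by positivity
  nlinarith

theorem logistic_le_competition_rate (ha : 0 ≤ a) (hk : 0 ≤ k) (hm : 0 ≤ m) (hx : 0 ≤ x)
    {s : ℝ} (hxs : x ≤ s) (hy : 0 ≤ y) :
    (1 + m * s) * y * (persistenceLevel a k m s - y) ≤
      y * (1 / (1 + k * x) - y - a * x - m * x * y) := by
  have hM : (1 + m * s) * persistenceLevel a k m s = 1 / (1 + k * s) - a * s := by
    unfold persistenceLevel
    field_simp [(by nlinarith : 1 + m * s ≠ 0)]
  have hinv : 1 / (1 + k * s) ≤ 1 / (1 + k * x) := by gcongr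
  rw [mul_comm (1 + m * s), mul_assoc, mul_sub, hM]
  gcongr y * ?_
  nlinarith [mul_le_mul_of_nonneg_left hxs ha,
    mul_le_mul_of_nonneg_right (mul_le_mul_of_nonneg_left hxs hm) hy]

theorem persistenceLevel_one_pos (ha : 0 < a) (hk : 0 ≤ k) (hk1 : k < 1 / a - 1) (hm : 0 ≤ m) :
    0 < persistenceLevel a k m 1 := by
  have hak : a * (1 + k) < 1 := by
    rw [lt_sub_iff_add_lt, lt_div_iff₀ ha] at hk1
    linarith
  rw [persistenceLevel, mul_one, mul_one]
  exact div_pos (sub_pos.2 ((lt_div_iff₀ (by positivity)).2 hak)) (by positivity)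

theorem exists_one_lt_lt_persistenceLevel (hk : 0 ≤ k) (hm : 0 ≤ m) {r : ℝ}
    (hr : r < persistenceLevel a k m 1) : ∃ s > 1, r < persistenceLevel a k m s := by
  have hcont : ContinuousAt (persistenceLevel a k m) 1 := by
    unfold persistenceLevel
    fun_prop (disch := positivity)
  obtain ⟨s, hrs, hs⟩ := ((hcont.eventually (lt_mem_nhds hr)).filter_mono
    nhdsWithin_le_nhds |>.and (self_mem_nhdsWithin (s := Ioi 1))).exists
  exact ⟨s, hs, hrs⟩

end Rates

theorem liminf_y_ge_of_system_general
    (a b c k m : ℝ) (ha : 0 < a) (hb : 0 < b) (hc : 0 < c)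
    (hk : 0 < k) (hk1 : k < 1 / a - 1) (hm : 0 < m) (x y : ℝ → ℝ)
    (hx : Differentiable ℝ x) (hy : Differentiable ℝ y)
    (hxeq : ∀ t ≥ (0 : ℝ), deriv x t = b * x t * (1 - x t - c * y t))
    (hyeq : ∀ t ≥ (0 : ℝ), deriv y t =
      y t * (1 / (1 + k * x t) - y t - a * x t - m * x t * y t))
    (hxpos : ∀ t ≥ (0 : ℝ), 0 < x t) (hypos : ∀ t ≥ (0 : ℝ), 0 < y t) :
    (1 / (1 + k) - a) / (1 + m) ≤ Filter.liminf y Filter.atTop ∧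
      0 < (1 / (1 + k) - a) / (1 + m) := by
  have hlevel : persistenceLevel a k m 1 = (1 / (1 + k) - a) / (1 + m) := by
    simp [persistenceLevel]
  have hxle (s : ℝ) (hs : 1 < s) : ∀ᶠ t in atTop, x t ≤ s :=
    eventually_le_of_deriv_le_logistic (T := 0) hx hb zero_le_one hs fun t ht => by
      rw [hxeq t ht]
      nlinarith [mul_pos (mul_pos hb (hxpos t ht)) (mul_pos hc (hypos t ht))]
  have hyle : ∀ᶠ t in atTop, y t ≤ 2 :=
    eventually_le_of_deriv_le_logistic (T := 0) hy one_pos zero_le_one one_lt_two fun t ht =>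
      (hyeq t ht).trans_le <| competition_rate_le_logistic ha.le hk.le hm.le (hxpos t ht).le
        (hypos t ht).le
  have hyge (r : ℝ) (hr : r < persistenceLevel a k m 1) : ∀ᶠ t in atTop, r ≤ y t := by
    obtain ⟨s, hs, hrs⟩ := exists_one_lt_lt_persistenceLevel hk.le hm.le hr
    obtain ⟨T, hT⟩ := eventually_atTop.1 ((hxle s hs).and (eventually_ge_atTop 0))
    refine eventually_ge_of_logistic_le_deriv (β := 1 + m * s) hy (by positivity) hrs
      (fun t ht => hypos t (hT t ht).2) fun t ht => ?_
    rw [hyeq t (hT t ht).2]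
    exact logistic_le_competition_rate ha.le hk.le hm.le (hxpos t (hT t ht).2).le (hT t ht).1
      (hypos t (hT t ht).2).le
  have hcobdd : IsCoboundedUnder (· ≥ ·) atTop y :=
    (isBoundedUnder_of_eventually_le hyle).isCoboundedUnder_ge
  rw [← hlevel]
  exact ⟨le_of_forall_lt_imp_le_of_dense fun r hr => le_liminf_of_le hcobdd (hyge r hr),
    persistenceLevel_one_pos ha hk.le hk1 hm.le⟩

/-- **Persistence of the second species in system (2).**
For positive solutions of x' = b·x·(1 − x − c·y),
y' = y·(1/(1+k·x) − y − a·x − m·x·y) with a,b,c,k,m > 0, 0 < a < 1 and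
0 < k < 1/a − 1, we have liminf_{t→∞} y(t) ≥ (1/(1+k) − a)/(1+m),
and this lower bound is positive. -/
theorem liminf_y_ge_of_system
    (a b c k m : ℝ) (ha : 0 < a) (ha1 : a < 1) (hb : 0 < b) (hc : 0 < c)
    (hk : 0 < k) (hk1 : k < 1 / a - 1) (hm : 0 < m) (x y : ℝ → ℝ)
    (hx : Differentiable ℝ x) (hy : Differentiable ℝ y)
    (hxeq : ∀ t ≥ (0 : ℝ), deriv x t = b * x t * (1 - x t - c * y t))
    (hyeq : ∀ t ≥ (0 : ℝ), deriv y t =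
      y t * (1 / (1 + k * x t) - y t - a * x t - m * x t * y t))
    (hxpos : ∀ t ≥ (0 : ℝ), 0 < x t) (hypos : ∀ t ≥ (0 : ℝ), 0 < y t) :
    (1 / (1 + k) - a) / (1 + m) ≤ Filter.liminf y Filter.atTop ∧
      0 < (1 / (1 + k) - a) / (1 + m) :=
  liminf_y_ge_of_system_general a b c k m ha hb hc hk hk1 hm x y hx hy hxeq hyeq hxpos hypos
end

section
/- Let a,b,c,k,m > 0 with 0 < a < 1, 0 < c < 1 and 0 < k < 1/a − 1. Then there exists a unique positive equilibrium (x*, y*) of system (2) (with x*, y* > 0, F(x*,y*) = 0, G(x*,y*) = 0), and it is globally asymptotically stable in the open positive quadrant: every pair of differentiable functions x,y : ℝ → ℝ satisfying x'(t) = F(x(t),y(t)), y'(t) = G(x(t),y(t)) for t ≥ 0 with x(0) > 0, y(0) > 0 satisfies (x(t), y(t)) → (x*, y*) as t → ∞. -/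
/-!
The positive equilibria are the points `(x, (1 - x) / c)` with `x ∈ (0, 1)` a zero of the
per-capita growth rate of `y` along the `x`-nullcline. That rate is convex in `x`, negative at
`0` and positive at `1` (because `a (1 + k) < 1`), so it has exactly one such zero.

Along a solution, `(x', y')` solves a linear system whose off-diagonal coefficients are negative.
For such a competitive system the open cones `{x' < 0 < y'}` and `{y' < 0 < x'}` are forward
invariant, `(x', y')` stays zero once it vanishes, and otherwise `x'` cannot vanish without
entering one of the cones; so `x'` and `y'` have eventually constant signs. Hence `x` and `y`
are eventually monotone and, being bounded, converge to an equilibrium. At the boundary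
equilibria the missing species has a positive per-capita growth rate, so the limit is the
positive equilibrium.
-/

open Set Filter Topology Real

theorem le_mul_exp_neg_integral {f f' A : ℝ → ℝ} {a b : ℝ} (hab : a ≤ b)
    (hA : ContinuousOn A (Icc a b)) (hf : ContinuousOn f (Icc a b))
    (hf' : ∀ t ∈ Ioo a b, HasDerivAt f (f' t) t) (hle : ∀ t ∈ Ioo a b, A t * f t ≤ f' t) :
    f a ≤ f b * exp (-∫ s in a..b, A s) := by
  set I : ℝ → ℝ := fun t ↦ ∫ s in a..t, A s
  have hI : ContinuousOn I (Icc a b) := by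
    rw [← uIcc_of_le hab]
    exact intervalIntegral.continuousOn_primitive_interval (μ := MeasureTheory.volume)
      (by rw [uIcc_of_le hab]; exact hA.integrableOn_Icc)
  have hI' (t : ℝ) (ht : t ∈ Ioo a b) : HasDerivAt I (A t) t :=
    intervalIntegral.integral_hasDerivAt_right
      (hA.mono (by rw [uIcc_of_le ht.1.le]; exact Icc_subset_Icc_right ht.2.le)).intervalIntegrable
      ((hA.mono Ioo_subset_Icc_self).stronglyMeasurableAtFilter isOpen_Ioo t ht)
      (hA.continuousAt (Icc_mem_nhds ht.1 ht.2))
  have hmono : MonotoneOn (fun t ↦ f t * exp (-I t)) (Icc a b) := by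
    refine monotoneOn_of_hasDerivWithinAt_nonneg (convex_Icc a b) (hf.mul hI.neg.rexp)
      (fun t ht ↦ ?_) (fun t ht ↦ ?_) (f' := fun t ↦ (f' t - A t * f t) * exp (-I t))
    · rw [interior_Icc] at ht
      exact (((hf' t ht).mul (hI' t ht).neg.exp).congr_deriv
        (by simp only [Pi.neg_apply]; ring)).hasDerivWithinAt
    · rw [interior_Icc] at ht
      exact mul_nonneg (sub_nonneg.2 (hle t ht)) (exp_pos _).le
  simpa [I] using hmono (left_mem_Icc.2 hab) (right_mem_Icc.2 hab) hab

theorem pos_of_deriv_eq_mul {f g : ℝ → ℝ} (hf : Differentiable ℝ f) (hg : ContinuousOn g (Ici 0))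
    (hfg : ∀ t ≥ 0, deriv f t = g t * f t) (h₀ : 0 < f 0) {t : ℝ} (ht : 0 ≤ t) : 0 < f t := by
  have hle := le_mul_exp_neg_integral ht (hg.mono Icc_subset_Ici_self) hf.continuous.continuousOn
    (fun s _ ↦ (hf s).hasDerivAt) (fun s hs ↦ (hfg s hs.1.le).ge)
  exact pos_of_mul_pos_left (h₀.trans_le hle) (exp_pos _).le

theorem ODE_linear_solution_eqOn_zero {E : Type*} [NormedAddCommGroup E] [NormedSpace ℝ E]
    {M : ℝ → E →L[ℝ] E} {f : ℝ → E} {a b : ℝ} (hM : ContinuousOn M (Icc a b))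
    (hf : ContinuousOn f (Icc a b)) (hf' : ∀ t ∈ Ico a b, HasDerivWithinAt f (M t (f t)) (Ici t) t)
    (ha : f a = 0) : EqOn f 0 (Icc a b) := by
  obtain ⟨K, hK⟩ := isCompact_Icc.exists_bound_of_continuousOn hM
  refine ODE_solution_unique_of_mem_Icc_right (v := fun t ↦ M t) (s := fun _ ↦ univ)
    (K := K.toNNReal) (fun t ht ↦ ?_) hf hf' (fun _ _ ↦ mem_univ _) continuousOn_const
    (fun t _ ↦ by simpa using hasDerivWithinAt_zero (F := E) t (Ici t)) (fun _ _ ↦ mem_univ _) ha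
  refine ((M t).lipschitz.weaken ?_).lipschitzOnWith
  rw [← NNReal.coe_le_coe, coe_nnnorm]
  exact (hK t (Ico_subset_Icc_self ht)).trans (le_max_left _ _)

theorem eventually_mul_neg_nhdsGT {u v : ℝ → ℝ} {t d : ℝ} (hu : HasDerivAt u d t) (hu₀ : u t = 0)
    (hv : ContinuousAt v t) (hd : d * v t < 0) : ∀ᶠ s in 𝓝[>] t, u s * v s < 0 := by
  have hslope : Tendsto (fun s ↦ slope u t s * v s) (𝓝[>] t) (𝓝 (d * v t)) :=
    ((hasDerivAt_iff_tendsto_slope.1 hu).mono_left (nhdsGT_le_nhdsNE t)).mul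
      (hv.tendsto.mono_left nhdsWithin_le_nhds)
  filter_upwards [hslope.eventually (eventually_lt_nhds hd), self_mem_nhdsWithin] with s hs hts
  have hts' : 0 < s - t := sub_pos.2 hts
  rw [slope_def_field, hu₀, sub_zero] at hs
  have : u s * v s = (u s / (s - t) * v s) * (s - t) := by field_simp
  rw [this]
  exact mul_neg_of_neg_of_pos hs hts'

theorem IsPreconnected.neg_or_pos_of_ne_zero {s : Set ℝ} (hs : IsPreconnected s) {f : ℝ → ℝ}
    (hf : ContinuousOn f s) (hf₀ : ∀ x ∈ s, f x ≠ 0) : (∀ x ∈ s, f x < 0) ∨ (∀ x ∈ s, 0 < f x) := by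
  by_contra! h
  obtain ⟨⟨x, hx, hfx⟩, ⟨y, hy, hfy⟩⟩ := h
  obtain ⟨z, hz, hfz⟩ := hs.intermediate_value hy hx hf ⟨hfy, hfx⟩
  exact hf₀ z hz hfz

theorem le_of_deriv_neg_of_eq_s17 {f : ℝ → ℝ} (hf : Differentiable ℝ f) {M : ℝ} (h₀ : f 0 ≤ M)
    (hM : ∀ t ≥ 0, f t = M → deriv f t < 0) {t : ℝ} (ht : 0 ≤ t) : f t ≤ M :=
  image_le_of_deriv_right_lt_deriv_boundary' (B := fun _ ↦ M) (B' := 0)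
    hf.continuous.continuousOn (fun s _ ↦ (hf s).hasDerivAt.hasDerivWithinAt) h₀
    continuousOn_const (fun _ _ ↦ hasDerivWithinAt_const _ _ _) (fun s hs ↦ hM s hs.1)
    ⟨ht, le_rfl⟩

theorem exists_tendsto_of_monotoneOn_Ici {f : ℝ → ℝ} {T C : ℝ} (hf : MonotoneOn f (Ici T))
    (hC : ∀ t ≥ T, f t ≤ C) : ∃ L, Tendsto f atTop (𝓝 L) := by
  have hmono : Monotone fun t ↦ f (max t T) := fun s t hst ↦
    hf (le_max_right s T) (le_max_right t T) (max_le_max_right T hst)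
  have hbdd : BddAbove (range fun t ↦ f (max t T)) :=
    ⟨C, forall_mem_range.2 fun t ↦ hC _ (le_max_right _ _)⟩
  refine ⟨_, (tendsto_atTop_ciSup hmono hbdd).congr' ?_⟩
  filter_upwards [eventually_ge_atTop T] with t ht
  rw [max_eq_left ht]

theorem exists_tendsto_of_eventually_deriv_nonpos_or_nonneg {f : ℝ → ℝ} (hf : Differentiable ℝ f)
    {C : ℝ} (hbdd : ∀ᶠ t in atTop, |f t| ≤ C)
    (hsign : (∀ᶠ t in atTop, deriv f t ≤ 0) ∨ (∀ᶠ t in atTop, 0 ≤ deriv f t)) :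
    ∃ L, Tendsto f atTop (𝓝 L) := by
  suffices key : ∀ g : ℝ → ℝ, Differentiable ℝ g → (∀ᶠ t in atTop, |g t| ≤ C) →
      (∀ᶠ t in atTop, 0 ≤ deriv g t) → ∃ L, Tendsto g atTop (𝓝 L) by
    rcases hsign with hneg | hpos
    · obtain ⟨L, hL⟩ := key (-f) hf.neg (by simpa using hbdd)
        (by simpa [deriv.neg'] using hneg)
      exact ⟨-L, by simpa using hL.neg⟩
    · exact key f hf hbdd hpos
  intro g hg hbdd hpos
  obtain ⟨T, hT⟩ := eventually_atTop.1 (hbdd.and hpos)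
  refine exists_tendsto_of_monotoneOn_Ici (T := T) (C := C) ?_
    fun t ht ↦ (le_abs_self _).trans (hT t ht).1
  refine monotoneOn_of_deriv_nonneg (convex_Ici T) hg.continuous.continuousOn hg.differentiableOn
    fun t ht ↦ ?_
  rw [interior_Ici] at ht
  exact (hT t ht.le).2

theorem eq_zero_of_tendsto_deriv {f : ℝ → ℝ} (hf : Differentiable ℝ f) {L α : ℝ}
    (hL : Tendsto f atTop (𝓝 L)) (hα : Tendsto (deriv f) atTop (𝓝 α)) : α = 0 := by
  have hslope (n : ℕ) : ∃ ξ ∈ Ioo (n : ℝ) (n + 1), deriv f ξ = f (n + 1) - f n := by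
    simpa using exists_deriv_eq_slope f (lt_add_one (n : ℝ)) hf.continuous.continuousOn
      hf.differentiableOn
  choose ξ hξ hξf using hslope
  have hξ_tendsto : Tendsto ξ atTop atTop :=
    tendsto_atTop_mono (fun n ↦ (hξ n).1.le) tendsto_natCast_atTop_atTop
  have hf_nat : Tendsto (fun n : ℕ ↦ f n) atTop (𝓝 L) := hL.comp tendsto_natCast_atTop_atTop
  have hf_succ : Tendsto (fun n : ℕ ↦ f (n + 1)) atTop (𝓝 L) :=
    hL.comp (tendsto_atTop_add_const_right _ 1 tendsto_natCast_atTop_atTop)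
  refine tendsto_nhds_unique (hα.comp hξ_tendsto) ?_
  simpa [Function.comp_def, hξf] using hf_succ.sub hf_nat

theorem pos_of_tendsto_of_deriv_eq_mul {f g : ℝ → ℝ} (hf : Differentiable ℝ f)
    (hpos : ∀ t ≥ 0, 0 < f t) (hfg : ∀ t ≥ 0, deriv f t = g t * f t) {β L : ℝ}
    (hg : Tendsto g atTop (𝓝 β)) (hβ : 0 < β) (hL : Tendsto f atTop (𝓝 L)) : 0 < L := by
  obtain ⟨T, hT⟩ := eventually_atTop.1
    ((hg.eventually (eventually_gt_nhds hβ)).and (eventually_ge_atTop 0))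
  have hmono : MonotoneOn f (Ici T) := by
    refine monotoneOn_of_deriv_nonneg (convex_Ici T) hf.continuous.continuousOn
      hf.differentiableOn fun t ht ↦ ?_
    rw [interior_Ici] at ht
    rw [hfg t (hT t ht.le).2]
    exact (mul_pos (hT t ht.le).1 (hpos t (hT t ht.le).2)).le
  refine (hpos T (hT T le_rfl).2).trans_le (ge_of_tendsto hL ?_)
  filter_upwards [eventually_ge_atTop T] with t ht
  exact hmono self_mem_Ici ht ht

theorem ConvexOn.eq_of_apply_eq_zero {s : Set ℝ} {f : ℝ → ℝ} (hf : ConvexOn ℝ s f) {x₀ y z : ℝ}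
    (hx₀ : x₀ ∈ s) (hfx₀ : f x₀ < 0) (hy : y ∈ s) (hz : z ∈ s) (hx₀y : x₀ < y) (hx₀z : x₀ < z)
    (hfy : f y = 0) (hfz : f z = 0) : y = z := by
  wlog hyz : y < z generalizing y z
  · rcases (not_lt.1 hyz).lt_or_eq with h | h
    · exact (this hz hy hx₀z hx₀y hfz hfy h).symm
    · exact h.symm
  have hslope := hf.slope_mono_adjacent hx₀ hz hx₀y hyz
  rw [hfy, hfz, sub_self, zero_div, zero_sub, neg_div] at hslope
  linarith [div_neg_of_neg_of_pos hfx₀ (sub_pos.2 hx₀y)]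

structure IsCompetitiveLinearSolution (u v A B C D : ℝ → ℝ) : Prop where
  continuousOn_A : ContinuousOn A (Ioi 0)
  continuousOn_B : ContinuousOn B (Ioi 0)
  continuousOn_C : ContinuousOn C (Ioi 0)
  continuousOn_D : ContinuousOn D (Ioi 0)
  hasDerivAt_u : ∀ t > 0, HasDerivAt u (A t * u t + B t * v t) t
  hasDerivAt_v : ∀ t > 0, HasDerivAt v (C t * u t + D t * v t) t
  B_neg : ∀ t > 0, B t < 0
  C_neg : ∀ t > 0, C t < 0

namespace IsCompetitiveLinearSolution

variable {u v A B C D : ℝ → ℝ}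

theorem swap (h : IsCompetitiveLinearSolution u v A B C D) :
    IsCompetitiveLinearSolution v u D C B A where
  continuousOn_A := h.continuousOn_D
  continuousOn_B := h.continuousOn_C
  continuousOn_C := h.continuousOn_B
  continuousOn_D := h.continuousOn_A
  hasDerivAt_u t ht := (h.hasDerivAt_v t ht).congr_deriv (add_comm _ _)
  hasDerivAt_v t ht := (h.hasDerivAt_u t ht).congr_deriv (add_comm _ _)
  B_neg := h.C_neg
  C_neg := h.B_neg

theorem continuousOn_u (h : IsCompetitiveLinearSolution u v A B C D) : ContinuousOn u (Ioi 0) :=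
  fun t ht ↦ (h.hasDerivAt_u t ht).continuousAt.continuousWithinAt

theorem eq_zero_of_eq_zero (h : IsCompetitiveLinearSolution u v A B C D) {t₀ : ℝ} (ht₀ : 0 < t₀)
    (hu : u t₀ = 0) (hv : v t₀ = 0) {t : ℝ} (ht : t₀ ≤ t) : u t = 0 ∧ v t = 0 := by
  have hpos : Icc t₀ t ⊆ Ioi 0 := fun s hs ↦ ht₀.trans_le hs.1
  let M : ℝ → ℝ × ℝ →L[ℝ] ℝ × ℝ := fun s ↦
    (A s • ContinuousLinearMap.fst ℝ ℝ ℝ + B s • ContinuousLinearMap.snd ℝ ℝ ℝ).prod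
      (C s • ContinuousLinearMap.fst ℝ ℝ ℝ + D s • ContinuousLinearMap.snd ℝ ℝ ℝ)
  have hM : ContinuousOn M (Icc t₀ t) := by
    refine (ContinuousLinearMap.prodₗᵢ ℝ).continuous.comp_continuousOn (ContinuousOn.prodMk ?_ ?_)
    · exact ((h.continuousOn_A.mono hpos).smul continuousOn_const).add
        ((h.continuousOn_B.mono hpos).smul continuousOn_const)
    · exact ((h.continuousOn_C.mono hpos).smul continuousOn_const).add
        ((h.continuousOn_D.mono hpos).smul continuousOn_const)
  have hderiv (s : ℝ) (hs : s ∈ Icc t₀ t) : HasDerivAt (fun r ↦ (u r, v r)) (M s (u s, v s)) s := by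
    convert (h.hasDerivAt_u s (hpos hs)).prodMk (h.hasDerivAt_v s (hpos hs)) using 1
    simp [M]
  have hzero := ODE_linear_solution_eqOn_zero hM
    (fun s hs ↦ (hderiv s hs).continuousAt.continuousWithinAt)
    (fun s hs ↦ (hderiv s (Ico_subset_Icc_self hs)).hasDerivWithinAt) (by simp [hu, hv])
    ⟨ht, le_rfl⟩
  simpa using hzero

theorem neg_and_pos_of_forall_Ioo (h : IsCompetitiveLinearSolution u v A B C D) {t₀ T : ℝ}
    (ht₀ : 0 < t₀) (hT : t₀ ≤ T) (hu : u t₀ < 0) (hv : 0 < v t₀)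
    (hcone : ∀ s ∈ Ioo t₀ T, u s < 0 ∧ 0 < v s) : u T < 0 ∧ 0 < v T := by
  have hpos : Icc t₀ T ⊆ Ioi 0 := fun s hs ↦ ht₀.trans_le hs.1
  have hpos' (s : ℝ) (hs : s ∈ Ioo t₀ T) : 0 < s := hpos (Ioo_subset_Icc_self hs)
  have hu' := le_mul_exp_neg_integral (f := fun s ↦ -u s) hT (h.continuousOn_A.mono hpos)
    (h.continuousOn_u.neg.mono hpos) (fun s hs ↦ (h.hasDerivAt_u s (hpos' s hs)).neg)
    fun s hs ↦ by nlinarith [h.B_neg s (hpos' s hs), (hcone s hs).2]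
  have hv' := le_mul_exp_neg_integral hT (h.continuousOn_D.mono hpos)
    (h.swap.continuousOn_u.mono hpos) (fun s hs ↦ h.hasDerivAt_v s (hpos' s hs))
    fun s hs ↦ by nlinarith [h.C_neg s (hpos' s hs), (hcone s hs).1]
  constructor
  · nlinarith [exp_pos (-∫ s in t₀..T, A s)]
  · nlinarith [exp_pos (-∫ s in t₀..T, D s)]

theorem neg_and_pos_of_neg_and_pos (h : IsCompetitiveLinearSolution u v A B C D) {t₀ : ℝ}
    (ht₀ : 0 < t₀) (hu : u t₀ < 0) (hv : 0 < v t₀) {t : ℝ} (ht : t₀ ≤ t) : u t < 0 ∧ 0 < v t := by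
  by_contra hbad
  have hpos : Icc t₀ t ⊆ Ioi 0 := fun s hs ↦ ht₀.trans_le hs.1
  set S := (Icc t₀ t ∩ u ⁻¹' Ici 0) ∪ (Icc t₀ t ∩ v ⁻¹' Iic 0)
  have hS : IsCompact S := isCompact_Icc.of_isClosed_subset
    (((h.continuousOn_u.mono hpos).preimage_isClosed_of_isClosed isClosed_Icc isClosed_Ici).union
      ((h.swap.continuousOn_u.mono hpos).preimage_isClosed_of_isClosed isClosed_Icc isClosed_Iic))
    (union_subset inter_subset_left inter_subset_left)
  have htS : t ∈ S := by
    by_cases hut : u t < 0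
    · exact Or.inr ⟨⟨ht, le_rfl⟩, not_lt.1 fun hvt ↦ hbad ⟨hut, hvt⟩⟩
    · exact Or.inl ⟨⟨ht, le_rfl⟩, not_lt.1 hut⟩
  have hTS : sInf S ∈ S := hS.sInf_mem ⟨t, htS⟩
  have hTt : sInf S ∈ Icc t₀ t := by rcases hTS with hT | hT <;> exact hT.1
  have hcone (s : ℝ) (hs : s ∈ Ioo t₀ (sInf S)) : u s < 0 ∧ 0 < v s := by
    have hsIcc : s ∈ Icc t₀ t := ⟨hs.1.le, hs.2.le.trans hTt.2⟩
    have hsS : s ∉ S := fun hsS ↦ not_le.2 hs.2 (csInf_le hS.bddBelow hsS)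
    exact ⟨not_le.1 fun hus ↦ hsS (Or.inl ⟨hsIcc, hus⟩),
      not_le.1 fun hvs ↦ hsS (Or.inr ⟨hsIcc, hvs⟩)⟩
  obtain ⟨huT, hvT⟩ := h.neg_and_pos_of_forall_Ioo ht₀ hTt.1 hu hv hcone
  rcases hTS with hT | hT
  exacts [not_le.2 huT hT.2, not_le.2 hvT hT.2]

theorem eventually_nonpos_or_eventually_nonneg (h : IsCompetitiveLinearSolution u v A B C D) :
    (∀ᶠ t in atTop, u t ≤ 0) ∨ (∀ᶠ t in atTop, 0 ≤ u t) := by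
  by_cases hzero : ∃ t₀ > 0, u t₀ = 0 ∧ v t₀ = 0
  · obtain ⟨t₀, ht₀, hu, hv⟩ := hzero
    exact Or.inl (eventually_atTop.2 ⟨t₀, fun t ht ↦ (h.eq_zero_of_eq_zero ht₀ hu hv ht).1.le⟩)
  by_cases hneg : ∃ t₀ > 0, u t₀ < 0 ∧ 0 < v t₀
  · obtain ⟨t₀, ht₀, hu, hv⟩ := hneg
    exact Or.inl (eventually_atTop.2
      ⟨t₀, fun t ht ↦ (h.neg_and_pos_of_neg_and_pos ht₀ hu hv ht).1.le⟩)
  by_cases hpos : ∃ t₀ > 0, 0 < u t₀ ∧ v t₀ < 0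
  · obtain ⟨t₀, ht₀, hu, hv⟩ := hpos
    exact Or.inr (eventually_atTop.2
      ⟨t₀, fun t ht ↦ (h.swap.neg_and_pos_of_neg_and_pos ht₀ hv hu ht).2.le⟩)
  -- At a zero of `u`, `u' = B v` has the sign of `-v`, so `u v < 0` just after it.
  have hne (t : ℝ) (ht : t ∈ Ioi 0) : u t ≠ 0 := by
    intro hut
    have hvt : v t ≠ 0 := fun hvt ↦ hzero ⟨t, ht, hut, hvt⟩
    have hd : (A t * u t + B t * v t) * v t < 0 := by
      rw [hut, mul_zero, zero_add, mul_assoc]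
      exact mul_neg_of_neg_of_pos (h.B_neg t ht) (mul_self_pos.2 hvt)
    obtain ⟨s, hs, hts⟩ := ((eventually_mul_neg_nhdsGT (h.hasDerivAt_u t ht) hut
      (h.swap.hasDerivAt_u t ht).continuousAt hd).and self_mem_nhdsWithin).exists
    rcases mul_neg_iff.1 hs with ⟨hus, hvs⟩ | ⟨hus, hvs⟩
    exacts [hpos ⟨s, ht.trans hts, hus, hvs⟩, hneg ⟨s, ht.trans hts, hus, hvs⟩]
  rcases isPreconnected_Ioi.neg_or_pos_of_ne_zero h.continuousOn_u hne with hu | hu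
  · exact Or.inl (eventually_atTop.2 ⟨1, fun t ht ↦ (hu t (one_pos.trans_le ht)).le⟩)
  · exact Or.inr (eventually_atTop.2 ⟨1, fun t ht ↦ (hu t (one_pos.trans_le ht)).le⟩)

end IsCompetitiveLinearSolution

/-- The per-capita growth rates of system (2): `F = x * rateX` and `G = y * rateY`. -/
def rateX (b c : ℝ) (p : ℝ × ℝ) : ℝ := b * (1 - p.1 - c * p.2)

noncomputable def rateY (a k m : ℝ) (p : ℝ × ℝ) : ℝ :=
  1 / (1 + k * p.1) - p.2 - a * p.1 - m * p.1 * p.2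

noncomputable def nullclineRateY (a c k m x : ℝ) : ℝ := rateY a k m (x, (1 - x) / c)

section Rates

variable {a b c k m : ℝ}

theorem continuous_rateX : Continuous (rateX b c) := by
  unfold rateX
  fun_prop

theorem continuousAt_rateY {p : ℝ × ℝ} (hp : 1 + k * p.1 ≠ 0) : ContinuousAt (rateY a k m) p := by
  unfold rateY
  fun_prop (disch := exact hp)

theorem hasDerivAt_nullclineRateY {x : ℝ} (hx : 1 + k * x ≠ 0) :
    HasDerivAt (nullclineRateY a c k m)
      (-k / (1 + k * x) ^ 2 + 1 / c - a - m * (1 - 2 * x) / c) x := by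
  have hinv : HasDerivAt (fun x ↦ 1 / (1 + k * x)) (-k / (1 + k * x) ^ 2) x := by
    simpa [one_div] using (((hasDerivAt_id x).const_mul k).const_add 1).fun_inv hx
  have hnull : HasDerivAt (fun x ↦ (1 - x) / c) (-1 / c) x := by
    simpa using ((hasDerivAt_id x).const_sub 1).div_const c
  refine (((hinv.fun_sub hnull).fun_sub ((hasDerivAt_id' x).const_mul a)).fun_sub
    (((hasDerivAt_id' x).const_mul m).fun_mul hnull)).congr_deriv ?_
  ring

theorem convexOn_nullclineRateY (hc : 0 < c) (hk : 0 ≤ k) (hm : 0 ≤ m) :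
    ConvexOn ℝ (Ici 0) (nullclineRateY a c k m) := by
  have hpos {x : ℝ} (hx : 0 ≤ x) : 0 < 1 + k * x := by positivity
  refine MonotoneOn.convexOn_of_deriv (convex_Ici 0)
    (fun x hx ↦ (hasDerivAt_nullclineRateY (hpos hx).ne').continuousAt.continuousWithinAt)
    (fun x hx ↦ (hasDerivAt_nullclineRateY
      (hpos (interior_subset hx : x ∈ Ici 0)).ne').differentiableAt.differentiableWithinAt)
    ?_
  rw [interior_Ici]
  intro x hx y hy hxy
  rw [(hasDerivAt_nullclineRateY (hpos hx.le).ne').deriv,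
    (hasDerivAt_nullclineRateY (hpos hy.le).ne').deriv]
  have : k / (1 + k * y) ^ 2 ≤ k / (1 + k * x) ^ 2 := by
    have := hpos hx.le
    gcongr
  have : m * (1 - 2 * y) / c ≤ m * (1 - 2 * x) / c := by gcongr
  rw [neg_div, neg_div]
  linarith

theorem existsUnique_nullclineRateY_eq_zero (hc : 0 < c) (hc1 : c < 1) (hk : 0 ≤ k)
    (hm : 0 ≤ m) (hak : a * (1 + k) < 1) :
    ∃! x, x ∈ Ioo 0 1 ∧ nullclineRateY a c k m x = 0 := by
  have hR0 : nullclineRateY a c k m 0 < 0 := by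
    have : 1 < 1 / c := by rw [one_div]; exact (one_lt_inv₀ hc).2 hc1
    simp only [nullclineRateY, rateY, mul_zero, zero_mul, add_zero, div_one, sub_zero]
    linarith
  have hR1 : 0 < nullclineRateY a c k m 1 := by
    simp only [nullclineRateY, rateY]
    rw [mul_one, sub_self, zero_div, mul_zero, sub_zero, sub_zero, mul_one, sub_pos,
      lt_div_iff₀ (by positivity)]
    exact hak
  obtain ⟨x, hx, hRx⟩ := intermediate_value_Ioo zero_le_one
    (fun x hx ↦ (hasDerivAt_nullclineRateY
      (by nlinarith [hx.1] : 1 + k * x ≠ 0)).continuousAt.continuousWithinAt)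
    ⟨hR0, hR1⟩
  exact ⟨x, ⟨hx, hRx⟩, fun y hy ↦ (convexOn_nullclineRateY hc hk hm).eq_of_apply_eq_zero
    self_mem_Ici hR0 hy.1.1.le hx.1.le hy.1.1 hx.1 hy.2 hRx⟩

end Rates

def IsPositiveEquilibrium (a b c k m : ℝ) (p : ℝ × ℝ) : Prop :=
  0 < p.1 ∧ 0 < p.2 ∧ b * p.1 * (1 - p.1 - c * p.2) = 0 ∧
    p.2 * (1 / (1 + k * p.1) - p.2 - a * p.1 - m * p.1 * p.2) = 0

section Equilibrium

variable {a b c k m : ℝ}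

theorem isPositiveEquilibrium_iff (hb : 0 < b) (hc : 0 < c) {p : ℝ × ℝ} :
    IsPositiveEquilibrium a b c k m p ↔
      p.1 ∈ Ioo 0 1 ∧ nullclineRateY a c k m p.1 = 0 ∧ p.2 = (1 - p.1) / c := by
  obtain ⟨x, y⟩ := p
  simp only [IsPositiveEquilibrium, nullclineRateY, rateY, mem_Ioo]
  constructor
  · rintro ⟨hx, hy, hF, hG⟩
    have hnull : y = (1 - x) / c := by
      rw [eq_div_iff hc.ne']
      linarith [(mul_eq_zero.1 hF).resolve_left (mul_pos hb hx).ne']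
    subst hnull
    refine ⟨⟨hx, ?_⟩, (mul_eq_zero.1 hG).resolve_left hy.ne', rfl⟩
    linarith [(div_pos_iff_of_pos_right hc).1 hy]
  · rintro ⟨⟨hx, hx1⟩, hR, rfl⟩
    refine ⟨hx, div_pos (by linarith) hc, ?_, by rw [hR, mul_zero]⟩
    field_simp
    ring

theorem existsUnique_isPositiveEquilibrium (hb : 0 < b) (hc : 0 < c) (hc1 : c < 1) (hk : 0 ≤ k)
    (hm : 0 ≤ m) (hak : a * (1 + k) < 1) : ∃! p, IsPositiveEquilibrium a b c k m p := by
  obtain ⟨x, hx, huniq⟩ := existsUnique_nullclineRateY_eq_zero hc hc1 hk hm hak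
  refine ⟨(x, (1 - x) / c), (isPositiveEquilibrium_iff hb hc).2 ⟨hx.1, hx.2, rfl⟩, fun p hp ↦ ?_⟩
  obtain ⟨hp1, hR, hp2⟩ := (isPositiveEquilibrium_iff hb hc).1 hp
  have hpx : p.1 = x := huniq p.1 ⟨hp1, hR⟩
  exact Prod.ext hpx (by rw [hp2, hpx])

end Equilibrium

structure IsPositiveSolution (a b c k m : ℝ) (x y : ℝ → ℝ) : Prop where
  differentiable_x : Differentiable ℝ x
  differentiable_y : Differentiable ℝ y
  deriv_x : ∀ t ≥ (0 : ℝ), deriv x t = b * x t * (1 - x t - c * y t)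
  deriv_y : ∀ t ≥ (0 : ℝ), deriv y t = y t * (1 / (1 + k * x t) - y t - a * x t - m * x t * y t)
  x_zero_pos : 0 < x 0
  y_zero_pos : 0 < y 0

namespace IsPositiveSolution

variable {a b c k m : ℝ} {x y : ℝ → ℝ}

theorem continuous_x (hs : IsPositiveSolution a b c k m x y) : Continuous x :=
  hs.differentiable_x.continuous

theorem continuous_y (hs : IsPositiveSolution a b c k m x y) : Continuous y :=
  hs.differentiable_y.continuous

theorem deriv_x_eq (hs : IsPositiveSolution a b c k m x y) {t : ℝ} (ht : 0 ≤ t) :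
    deriv x t = rateX b c (x t, y t) * x t := by
  rw [hs.deriv_x t ht, rateX]
  ring

theorem deriv_y_eq (hs : IsPositiveSolution a b c k m x y) {t : ℝ} (ht : 0 ≤ t) :
    deriv y t = rateY a k m (x t, y t) * y t := by
  rw [hs.deriv_y t ht, rateY]
  ring

theorem x_pos (hs : IsPositiveSolution a b c k m x y) {t : ℝ} (ht : 0 ≤ t) : 0 < x t :=
  pos_of_deriv_eq_mul hs.differentiable_x
    (continuous_rateX.comp (hs.continuous_x.prodMk hs.continuous_y)).continuousOn
    (fun _ ↦ hs.deriv_x_eq) hs.x_zero_pos ht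

theorem one_add_mul_x_pos (hs : IsPositiveSolution a b c k m x y) (hk : 0 ≤ k) {t : ℝ}
    (ht : 0 ≤ t) : 0 < 1 + k * x t := by
  have := hs.x_pos ht
  positivity

theorem continuousOn_rateY (hs : IsPositiveSolution a b c k m x y) (hk : 0 ≤ k) :
    ContinuousOn (fun t ↦ rateY a k m (x t, y t)) (Ici 0) := fun _ ht ↦
  (continuousAt_rateY (hs.one_add_mul_x_pos hk ht).ne').comp_continuousWithinAt
    (hs.continuous_x.prodMk hs.continuous_y).continuousWithinAt

theorem y_pos (hs : IsPositiveSolution a b c k m x y) (hk : 0 ≤ k) {t : ℝ} (ht : 0 ≤ t) :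
    0 < y t :=
  pos_of_deriv_eq_mul hs.differentiable_y (hs.continuousOn_rateY hk) (fun _ ↦ hs.deriv_y_eq)
    hs.y_zero_pos ht

theorem x_le (hs : IsPositiveSolution a b c k m x y) (hb : 0 < b) (hc : 0 < c) (hk : 0 ≤ k)
    {t : ℝ} (ht : 0 ≤ t) : x t ≤ max (x 0) 1 := by
  refine le_of_deriv_neg_of_eq_s17 hs.differentiable_x (le_max_left _ _) (fun s hs₀ hxs ↦ ?_) ht
  have hx1 : 1 ≤ x s := hxs ▸ le_max_right _ _
  rw [hs.deriv_x s hs₀]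
  exact mul_neg_of_pos_of_neg (mul_pos hb (hs.x_pos hs₀))
    (by nlinarith [mul_pos hc (hs.y_pos hk hs₀)])

theorem y_le (hs : IsPositiveSolution a b c k m x y) (ha : 0 < a) (hk : 0 ≤ k) (hm : 0 ≤ m)
    {t : ℝ} (ht : 0 ≤ t) : y t ≤ max (y 0) 1 := by
  refine le_of_deriv_neg_of_eq_s17 hs.differentiable_y (le_max_left _ _) (fun s hs₀ hys ↦ ?_) ht
  have hy1 : 1 ≤ y s := hys ▸ le_max_right _ _
  have hx := hs.x_pos hs₀
  have hinv : 1 / (1 + k * x s) ≤ 1 := (div_le_one (hs.one_add_mul_x_pos hk hs₀)).2 (by nlinarith)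
  rw [hs.deriv_y s hs₀]
  exact mul_neg_of_pos_of_neg (hs.y_pos hk hs₀)
    (by nlinarith [mul_pos ha hx, mul_nonneg (mul_nonneg hm hx.le) (hs.y_pos hk hs₀).le])

theorem hasDerivAt_deriv_x (hs : IsPositiveSolution a b c k m x y) {t : ℝ} (ht : 0 < t) :
    HasDerivAt (deriv x)
      (b * (1 - 2 * x t - c * y t) * deriv x t + -(b * c * x t) * deriv y t) t := by
  have hx := (hs.differentiable_x t).hasDerivAt
  have hy := (hs.differentiable_y t).hasDerivAt
  have heq : deriv x =ᶠ[𝓝 t] fun s ↦ b * x s * (1 - x s - c * y s) :=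
    eventually_of_mem (Ioi_mem_nhds ht) fun s hs₀ ↦ hs.deriv_x s (le_of_lt hs₀)
  rw [heq.hasDerivAt_iff]
  exact ((hx.const_mul b).fun_mul ((hx.const_sub 1).fun_sub (hy.const_mul c))).congr_deriv
    (by ring)

theorem hasDerivAt_deriv_y (hs : IsPositiveSolution a b c k m x y) (hk : 0 ≤ k) {t : ℝ}
    (ht : 0 < t) :
    HasDerivAt (deriv y)
      (-(y t * (k / (1 + k * x t) ^ 2 + a + m * y t)) * deriv x t +
        (1 / (1 + k * x t) - 2 * y t - a * x t - 2 * m * x t * y t) * deriv y t) t := by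
  have hx := (hs.differentiable_x t).hasDerivAt
  have hy := (hs.differentiable_y t).hasDerivAt
  have hpos := hs.one_add_mul_x_pos hk ht.le
  have heq : deriv y =ᶠ[𝓝 t] fun s ↦ y s * (1 / (1 + k * x s) - y s - a * x s - m * x s * y s) :=
    eventually_of_mem (Ioi_mem_nhds ht) fun s hs₀ ↦ hs.deriv_y s (le_of_lt hs₀)
  rw [heq.hasDerivAt_iff]
  have hinv : HasDerivAt (fun s ↦ 1 / (1 + k * x s)) (-(k * deriv x t) / (1 + k * x t) ^ 2) t := by
    simpa [one_div] using ((hx.const_mul k).const_add 1).fun_inv hpos.ne'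
  refine (hy.fun_mul (((hinv.fun_sub hy).fun_sub (hx.const_mul a)).fun_sub
    ((hx.const_mul m).fun_mul hy))).congr_deriv ?_
  field_simp
  ring

theorem isCompetitiveLinearSolution (hs : IsPositiveSolution a b c k m x y) (ha : 0 < a)
    (hb : 0 < b) (hc : 0 < c) (hk : 0 ≤ k) (hm : 0 ≤ m) :
    IsCompetitiveLinearSolution (deriv x) (deriv y)
      (fun t ↦ b * (1 - 2 * x t - c * y t)) (fun t ↦ -(b * c * x t))
      (fun t ↦ -(y t * (k / (1 + k * x t) ^ 2 + a + m * y t)))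
      (fun t ↦ 1 / (1 + k * x t) - 2 * y t - a * x t - 2 * m * x t * y t) := by
  have := hs.continuous_x
  have := hs.continuous_y
  have hne (t : ℝ) (ht : t ∈ Ioi 0) : 1 + k * x t ≠ 0 := (hs.one_add_mul_x_pos hk ht.le).ne'
  have hne_sq (t : ℝ) (ht : t ∈ Ioi 0) : (1 + k * x t) ^ 2 ≠ 0 := pow_ne_zero 2 (hne t ht)
  refine ⟨by fun_prop, by fun_prop, by fun_prop (disch := exact hne_sq),
    by fun_prop (disch := exact hne), fun t ht ↦ hs.hasDerivAt_deriv_x ht,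
    fun t ht ↦ hs.hasDerivAt_deriv_y hk ht, fun t ht ↦ ?_, fun t ht ↦ ?_⟩
  · exact neg_neg_of_pos (mul_pos (mul_pos hb hc) (hs.x_pos ht.le))
  · have hy := hs.y_pos hk ht.le
    have : 0 ≤ k / (1 + k * x t) ^ 2 := by positivity
    exact neg_neg_of_pos (mul_pos hy (by positivity))

theorem exists_tendsto (hs : IsPositiveSolution a b c k m x y) (ha : 0 < a) (hb : 0 < b)
    (hc : 0 < c) (hk : 0 ≤ k) (hm : 0 ≤ m) :
    ∃ p, Tendsto (fun t ↦ (x t, y t)) atTop (𝓝 p) := by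
  have hcomp := hs.isCompetitiveLinearSolution ha hb hc hk hm
  obtain ⟨L, hL⟩ := exists_tendsto_of_eventually_deriv_nonpos_or_nonneg hs.differentiable_x
    (eventually_atTop.2 ⟨0, fun t ht ↦ by
      rw [abs_of_pos (hs.x_pos ht)]; exact hs.x_le hb hc hk ht⟩)
    hcomp.eventually_nonpos_or_eventually_nonneg
  obtain ⟨M, hM⟩ := exists_tendsto_of_eventually_deriv_nonpos_or_nonneg hs.differentiable_y
    (eventually_atTop.2 ⟨0, fun t ht ↦ by
      rw [abs_of_pos (hs.y_pos hk ht)]; exact hs.y_le ha hk hm ht⟩)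
    hcomp.swap.eventually_nonpos_or_eventually_nonneg
  exact ⟨(L, M), hL.prodMk_nhds hM⟩

theorem fst_nonneg_of_tendsto (hs : IsPositiveSolution a b c k m x y) {p : ℝ × ℝ}
    (hp : Tendsto (fun t ↦ (x t, y t)) atTop (𝓝 p)) : 0 ≤ p.1 :=
  ge_of_tendsto hp.fst_nhds (eventually_atTop.2 ⟨0, fun _ ht ↦ (hs.x_pos ht).le⟩)

theorem snd_nonneg_of_tendsto (hs : IsPositiveSolution a b c k m x y) (hk : 0 ≤ k) {p : ℝ × ℝ}
    (hp : Tendsto (fun t ↦ (x t, y t)) atTop (𝓝 p)) : 0 ≤ p.2 :=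
  ge_of_tendsto hp.snd_nhds (eventually_atTop.2 ⟨0, fun _ ht ↦ (hs.y_pos hk ht).le⟩)

theorem tendsto_rateY (hs : IsPositiveSolution a b c k m x y) (hk : 0 ≤ k) {p : ℝ × ℝ}
    (hp : Tendsto (fun t ↦ (x t, y t)) atTop (𝓝 p)) :
    Tendsto (fun t ↦ rateY a k m (x t, y t)) atTop (𝓝 (rateY a k m p)) := by
  have := hs.fst_nonneg_of_tendsto hp
  exact (continuousAt_rateY (by positivity)).tendsto.comp hp

theorem rateX_mul_fst_eq_zero (hs : IsPositiveSolution a b c k m x y) {p : ℝ × ℝ}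
    (hp : Tendsto (fun t ↦ (x t, y t)) atTop (𝓝 p)) : rateX b c p * p.1 = 0 :=
  eq_zero_of_tendsto_deriv hs.differentiable_x hp.fst_nhds
    ((((continuous_rateX.tendsto p).comp hp).mul hp.fst_nhds).congr'
      (eventually_atTop.2 ⟨0, fun _ ht ↦ (hs.deriv_x_eq ht).symm⟩))

theorem rateY_mul_snd_eq_zero (hs : IsPositiveSolution a b c k m x y) (hk : 0 ≤ k) {p : ℝ × ℝ}
    (hp : Tendsto (fun t ↦ (x t, y t)) atTop (𝓝 p)) : rateY a k m p * p.2 = 0 :=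
  eq_zero_of_tendsto_deriv hs.differentiable_y hp.snd_nhds
    (((hs.tendsto_rateY hk hp).mul hp.snd_nhds).congr'
      (eventually_atTop.2 ⟨0, fun _ ht ↦ (hs.deriv_y_eq ht).symm⟩))

theorem fst_pos_of_rateX_pos (hs : IsPositiveSolution a b c k m x y) {p : ℝ × ℝ}
    (hp : Tendsto (fun t ↦ (x t, y t)) atTop (𝓝 p)) (hr : 0 < rateX b c p) : 0 < p.1 :=
  pos_of_tendsto_of_deriv_eq_mul hs.differentiable_x (fun _ ↦ hs.x_pos) (fun _ ↦ hs.deriv_x_eq)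
    ((continuous_rateX.tendsto p).comp hp) hr hp.fst_nhds

theorem snd_pos_of_rateY_pos (hs : IsPositiveSolution a b c k m x y) (hk : 0 ≤ k) {p : ℝ × ℝ}
    (hp : Tendsto (fun t ↦ (x t, y t)) atTop (𝓝 p)) (hr : 0 < rateY a k m p) : 0 < p.2 :=
  pos_of_tendsto_of_deriv_eq_mul hs.differentiable_y (fun _ ↦ hs.y_pos hk)
    (fun _ ↦ hs.deriv_y_eq) (hs.tendsto_rateY hk hp) hr hp.snd_nhds

theorem exists_isPositiveEquilibrium_tendsto (hs : IsPositiveSolution a b c k m x y) (ha : 0 < a)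
    (hb : 0 < b) (hc : 0 < c) (hc1 : c < 1) (hk : 0 ≤ k) (hm : 0 ≤ m) (hak : a * (1 + k) < 1) :
    ∃ p, IsPositiveEquilibrium a b c k m p ∧ Tendsto (fun t ↦ (x t, y t)) atTop (𝓝 p) := by
  obtain ⟨⟨L, M⟩, hp⟩ := hs.exists_tendsto ha hb hc hk hm
  have hF := hs.rateX_mul_fst_eq_zero hp
  have hG := hs.rateY_mul_snd_eq_zero hk hp
  simp only [rateX, rateY] at hF hG
  have hL : 0 < L := by
    refine (hs.fst_nonneg_of_tendsto hp).lt_of_ne fun hL ↦ ?_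
    subst hL
    have hM : M = 0 ∨ M = 1 := by
      simp only [mul_zero, zero_mul, add_zero, div_one, sub_zero, mul_eq_zero] at hG
      rcases hG with hG | hG
      exacts [Or.inr (by linarith), Or.inl hG]
    refine (hs.fst_pos_of_rateX_pos hp ?_).ne rfl
    rcases hM with rfl | rfl <;> simp only [rateX] <;> nlinarith
  have hnull : 1 - L - c * M = 0 :=
    (mul_eq_zero.1 ((mul_eq_zero.1 hF).resolve_right hL.ne')).resolve_left hb.ne'
  have hM : 0 < M := by
    refine (hs.snd_nonneg_of_tendsto hk hp).lt_of_ne fun hM ↦ ?_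
    subst hM
    obtain rfl : L = 1 := by linarith
    refine (hs.snd_pos_of_rateY_pos hk hp ?_).ne rfl
    simp only [rateY]
    rw [mul_one, mul_one, mul_zero, sub_zero, sub_zero, sub_pos, lt_div_iff₀ (by positivity)]
    exact hak
  refine ⟨(L, M), ⟨hL, hM, ?_, ?_⟩, hp⟩
  · simp [hnull]
  · show M * _ = 0
    rw [mul_comm, hG]

end IsPositiveSolution

theorem global_stability_positive_equilibrium_general
    (a b c k m : ℝ) (ha : 0 < a) (hb : 0 < b)
    (hc : 0 < c) (hc1 : c < 1) (hk : 0 < k) (hk1 : k < 1 / a - 1) (hm : 0 < m) :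
    ∃ p : ℝ × ℝ,
      (0 < p.1 ∧ 0 < p.2 ∧
        b * p.1 * (1 - p.1 - c * p.2) = 0 ∧
        p.2 * (1 / (1 + k * p.1) - p.2 - a * p.1 - m * p.1 * p.2) = 0) ∧
      (∀ q : ℝ × ℝ,
        (0 < q.1 ∧ 0 < q.2 ∧
          b * q.1 * (1 - q.1 - c * q.2) = 0 ∧
          q.2 * (1 / (1 + k * q.1) - q.2 - a * q.1 - m * q.1 * q.2) = 0) →
        q = p) ∧
      (∀ x y : ℝ → ℝ, Differentiable ℝ x → Differentiable ℝ y →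
        (∀ t ≥ (0 : ℝ), deriv x t = b * x t * (1 - x t - c * y t)) →
        (∀ t ≥ (0 : ℝ), deriv y t =
          y t * (1 / (1 + k * x t) - y t - a * x t - m * x t * y t)) →
        0 < x 0 → 0 < y 0 →
        Filter.Tendsto (fun t => (x t, y t)) Filter.atTop (nhds p)) := by
  have hak : a * (1 + k) < 1 := by
    rw [← lt_div_iff₀' ha]
    linarith
  obtain ⟨p, hp, huniq⟩ := existsUnique_isPositiveEquilibrium hb hc hc1 hk.le hm.le hak
  refine ⟨p, hp, huniq, fun x y hx hy hx' hy' hx₀ hy₀ ↦ ?_⟩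
  obtain ⟨q, hq, htendsto⟩ := IsPositiveSolution.exists_isPositiveEquilibrium_tendsto
    ⟨hx, hy, hx', hy', hx₀, hy₀⟩ ha hb hc hc1 hk.le hm.le hak
  rwa [huniq q hq] at htendsto

/-- **Global stability of the positive equilibrium E₂* of system (2).**
If a,b,c,k,m > 0 with 0 < a < 1, 0 < c < 1 and 0 < k < 1/a − 1, then system (2)
has a unique positive equilibrium (x*, y*), and every positive solution
converges to it as t → ∞. -/
theorem global_stability_positive_equilibrium
    (a b c k m : ℝ) (ha : 0 < a) (ha1 : a < 1) (hb : 0 < b)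
    (hc : 0 < c) (hc1 : c < 1) (hk : 0 < k) (hk1 : k < 1 / a - 1) (hm : 0 < m) :
    ∃ p : ℝ × ℝ,
      (0 < p.1 ∧ 0 < p.2 ∧
        b * p.1 * (1 - p.1 - c * p.2) = 0 ∧
        p.2 * (1 / (1 + k * p.1) - p.2 - a * p.1 - m * p.1 * p.2) = 0) ∧
      (∀ q : ℝ × ℝ,
        (0 < q.1 ∧ 0 < q.2 ∧
          b * q.1 * (1 - q.1 - c * q.2) = 0 ∧
          q.2 * (1 / (1 + k * q.1) - q.2 - a * q.1 - m * q.1 * q.2) = 0) →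
        q = p) ∧
      (∀ x y : ℝ → ℝ, Differentiable ℝ x → Differentiable ℝ y →
        (∀ t ≥ (0 : ℝ), deriv x t = b * x t * (1 - x t - c * y t)) →
        (∀ t ≥ (0 : ℝ), deriv y t =
          y t * (1 / (1 + k * x t) - y t - a * x t - m * x t * y t)) →
        0 < x 0 → 0 < y 0 →
        Filter.Tendsto (fun t => (x t, y t)) Filter.atTop (nhds p)) :=
  global_stability_positive_equilibrium_general a b c k m ha hb hc hc1 hk hk1 hm
end
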